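/- For all x, t, t' ∈ εℤ with t > t' > 0: a₁(x,t,m,ε) = Σ_{x'∈εℤ} [a₂(x',t',m,ε)·a₁(x−x'+ε, t−t'+ε, m, ε) + a₁(x',t',m,ε)·a₂(x'−x+ε, t−t'+ε, m, ε)] and a₂(x,t,m,ε) = Σ_{x'∈εℤ} [a₂(x',t',m,ε)·a₂(x−x'+ε, t−t'+ε, m, ε) − a₁(x',t',m,ε)·a₁(x'−x+ε, t−t'+ε, m, ε)]. -/

import Mathlib

open scoped BigOperators

/-- The final x-coordinate of a checker path from `(0,0)` encoded by its sequence of moves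
(`true` = move `(1,1)`, `false` = move `(-1,1)`). -/
def moveEndpoint {n : ℕ} (d : Fin n → Bool) : ℤ :=
  ∑ k, (if d k then (1 : ℤ) else -1)

/-- The number of turns of a checker path encoded by its sequence of moves. -/
def nturns {n : ℕ} (d : Fin n → Bool) : ℕ :=
  ((List.ofFn d).zip (List.ofFn d).tail).countP fun p => p.1 != p.2

/-- Checker paths from `(0,0)` to `(x,t)` whose first step is to `(1,1)`,
encoded by their sequences of moves. -/
def cpaths (x t : ℤ) : Finset (Fin t.toNat → Bool) :=
  Finset.univ.filter fun d => moveEndpoint d = x ∧ (List.ofFn d).headI = true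

/-- Feynman checkers amplitude with mass: `a(x·ε, t·ε, m, ε)` written in lattice
coordinates, i.e. `am m ε x t = (1+m²ε²)^((1-t)/2) * i * ∑ₛ (-i·m·ε)^turns(s)`. -/
noncomputable def am (m ε : ℝ) (x t : ℤ) : ℂ :=
  (Real.sqrt (1 + m ^ 2 * ε ^ 2) : ℂ) ^ (1 - t) * Complex.I *
    ∑ d ∈ cpaths x t, (-Complex.I * (m * ε)) ^ nturns d

/-!
Split the checker paths ending at `(x, t)` according to their last step: those ending with a
step `(-1, 1)` have an odd number of turns and make up the real part `a₁`, those ending with a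
step `(1, 1)` have an even number of turns and make up `a₂`. Removing the last step of a path
gives the lattice Dirac equation
`a₁(x, t+1) = (a₁(x+1, t) + mε a₂(x+1, t)) / √(1+m²ε²)`,
`a₂(x, t+1) = (a₂(x-1, t) - mε a₁(x-1, t)) / √(1+m²ε²)`.
The right-hand sides of Huygens' principle are finite sums of translates of `a₁, a₂`, hence
solve the same equation in `(x, t)` for `t ≥ t'`; at `t = t'` they reduce to `a(·, t')` because
`a(x, 1) = i·[x = 1]`. Solutions of the Dirac equation are determined by their values at one
time, so both sides agree for all `t ≥ t'`.
-/

open Finset Complex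

section Paths

lemma moveEndpoint_snoc {n : ℕ} (d : Fin n → Bool) (b : Bool) :
    moveEndpoint (Fin.snoc d b : Fin (n + 1) → Bool) = moveEndpoint d + if b then 1 else -1 := by
  simp [moveEndpoint, Fin.sum_univ_castSucc]

lemma abs_moveEndpoint_le {n : ℕ} (d : Fin n → Bool) : |moveEndpoint d| ≤ n := by
  refine (abs_sum_le_sum_abs _ _).trans ?_
  simpa using sum_le_sum fun k (_ : k ∈ univ) =>
    (by split_ifs <;> simp : |if d k then (1 : ℤ) else -1| ≤ 1)

lemma nturns_eq_sum {n : ℕ} (d : Fin (n + 1) → Bool) :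
    nturns d = ∑ k : Fin n, if d k.castSucc != d k.succ then 1 else 0 := by
  induction n with
  | zero => simp [nturns, List.ofFn_succ]
  | succ n ih =>
    have := ih (Fin.tail d)
    simp only [nturns, List.ofFn_succ, List.tail_cons, Fin.tail, Fin.succ_zero_eq_one] at this ⊢
    rw [List.zip_cons_cons, List.countP_cons, this, Fin.sum_univ_succ, Nat.add_comm]
    rfl

lemma nturns_snoc {n : ℕ} (d : Fin (n + 1) → Bool) (b : Bool) :
    nturns (Fin.snoc d b : Fin (n + 2) → Bool) =
      nturns d + if d (Fin.last n) != b then 1 else 0 := by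
  rw [nturns_eq_sum, Fin.sum_univ_castSucc]
  simp only [Fin.succ_castSucc, Fin.snoc_castSucc, Fin.succ_last, Fin.snoc_last, nturns_eq_sum]

def paths (x : ℤ) (n : ℕ) : Finset (Fin (n + 1) → Bool) :=
  {d | moveEndpoint d = x ∧ d 0 = true}

def pathsEndingWith (x : ℤ) (n : ℕ) (b : Bool) : Finset (Fin (n + 1) → Bool) :=
  {d ∈ paths x n | d (Fin.last n) = b}

lemma cpaths_natCast_succ (x : ℤ) (n : ℕ) : cpaths x (n + 1 : ℕ) = paths x n := by
  ext d
  simp [cpaths, paths, List.ofFn_succ]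

lemma sum_paths_eq_add (x : ℤ) (n : ℕ) {M : Type*} [AddCommMonoid M] (f : (Fin (n + 1) → Bool) → M) :
    ∑ d ∈ paths x n, f d =
      ∑ d ∈ pathsEndingWith x n true, f d + ∑ d ∈ pathsEndingWith x n false, f d := by
  simp only [pathsEndingWith, ← Bool.not_eq_true]
  exact (sum_filter_add_sum_filter_not _ _ _).symm

lemma pathsEndingWith_zero (x : ℤ) (b : Bool) :
    pathsEndingWith x 0 b = if b ∧ x = 1 then {fun _ => true} else ∅ := by
  ext d
  split_ifs with h
  · obtain ⟨rfl, rfl⟩ := h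
    simp [pathsEndingWith, paths, moveEndpoint, funext_iff, Fin.forall_fin_one]
  · simp only [pathsEndingWith, paths, mem_filter, mem_univ, true_and, notMem_empty, iff_false]
    rintro ⟨⟨rfl, h0⟩, rfl⟩
    simp [moveEndpoint, h0] at h

lemma pathsEndingWith_succ (x : ℤ) (n : ℕ) (b : Bool) :
    pathsEndingWith x (n + 1) b =
      (paths (x - if b then 1 else -1) n).map
        ⟨(Fin.snoc · b), Fin.snoc_left_injective (α := fun _ => Bool) b⟩ := by
  ext d
  simp only [pathsEndingWith, paths, mem_filter, mem_univ, true_and, mem_map,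
    Function.Embedding.coeFn_mk]
  constructor
  · rintro ⟨⟨hx, h0⟩, rfl⟩
    refine ⟨Fin.init d, ⟨?_, h0⟩, Fin.snoc_init_self d⟩
    rw [← Fin.snoc_init_self d, moveEndpoint_snoc] at hx
    omega
  · rintro ⟨e, ⟨hx, h0⟩, rfl⟩
    simp [moveEndpoint_snoc, hx, h0]

end Paths

section Amplitude

variable (m ε : ℝ)

noncomputable def amEndingWith (x : ℤ) (n : ℕ) (b : Bool) : ℂ :=
  (Real.sqrt (1 + m ^ 2 * ε ^ 2) : ℂ) ^ (-n : ℤ) * I *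
    ∑ d ∈ pathsEndingWith x n b, (-I * (m * ε)) ^ nturns d

lemma am_natCast_succ (x : ℤ) (n : ℕ) :
    am m ε x (n + 1 : ℕ) = amEndingWith m ε x n true + amEndingWith m ε x n false := by
  rw [am, amEndingWith, amEndingWith, cpaths_natCast_succ]
  -- the sum runs over `Fin ((n + 1 : ℕ) : ℤ).toNat → Bool`, equal to `Fin (n + 1) → Bool` only
  -- after unfolding `Int.toNat`
  erw [sum_paths_eq_add]
  push_cast
  ring_nf

lemma am_eq_zero_of_lt_abs {x t : ℤ} (ht : 0 ≤ t) (hx : t < |x|) : am m ε x t = 0 := by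
  have : cpaths x t = ∅ := by
    refine eq_empty_of_forall_notMem fun d hd => ?_
    have := abs_moveEndpoint_le d
    rw [(mem_filter.mp hd).2.1, Int.toNat_of_nonneg ht] at this
    omega
  simp [am, this]

lemma amEndingWith_zero (x : ℤ) (b : Bool) :
    amEndingWith m ε x 0 b = if b ∧ x = 1 then I else 0 := by
  rw [amEndingWith, pathsEndingWith_zero]
  split_ifs <;> simp [nturns]

lemma amEndingWith_succ (x : ℤ) (n : ℕ) (b : Bool) :
    amEndingWith m ε x (n + 1) b =
      (amEndingWith m ε (x - if b then 1 else -1) n b +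
        -I * (m * ε) * amEndingWith m ε (x - if b then 1 else -1) n (!b)) /
        Real.sqrt (1 + m ^ 2 * ε ^ 2) := by
  have hr : (Real.sqrt (1 + m ^ 2 * ε ^ 2) : ℂ) ≠ 0 := by
    rw [ofReal_ne_zero]; positivity
  have turns (c : Bool) : ∀ e ∈ pathsEndingWith (x - if b then 1 else -1) n c,
      (-I * (m * ε)) ^ nturns (Fin.snoc e b : Fin (n + 2) → Bool) =
        (if c != b then -I * (m * ε) else 1) * (-I * (m * ε)) ^ nturns e := by
    intro e he
    rw [nturns_snoc, (mem_filter.mp he).2]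
    split_ifs <;> ring
  rw [amEndingWith, pathsEndingWith_succ, sum_map, sum_paths_eq_add]
  simp only [Function.Embedding.coeFn_mk]
  rw [sum_congr rfl (turns true), sum_congr rfl (turns false), ← mul_sum, ← mul_sum,
    amEndingWith, amEndingWith]
  push_cast
  rw [neg_add, zpow_add₀ hr]
  cases b <;> simp <;> ring

lemma amEndingWith_true_re_eq_zero_and_false_im_eq_zero (n : ℕ) (x : ℤ) :
    (amEndingWith m ε x n true).re = 0 ∧ (amEndingWith m ε x n false).im = 0 := by
  induction n generalizing x with
  | zero => simp [amEndingWith_zero, apply_ite]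
  | succ n ih =>
    obtain ⟨h₁, h₂⟩ := ih (x - 1)
    obtain ⟨h₃, h₄⟩ := ih (x + 1)
    simp [amEndingWith_succ, div_ofReal_re, div_ofReal_im, h₁, h₂, h₃, h₄]

lemma re_am_natCast_succ (x : ℤ) (n : ℕ) :
    (am m ε x (n + 1 : ℕ)).re = (amEndingWith m ε x n false).re := by
  rw [am_natCast_succ]
  simp [(amEndingWith_true_re_eq_zero_and_false_im_eq_zero m ε n x).1]

lemma im_am_natCast_succ (x : ℤ) (n : ℕ) :
    (am m ε x (n + 1 : ℕ)).im = (amEndingWith m ε x n true).im := by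
  rw [am_natCast_succ]
  simp [(amEndingWith_true_re_eq_zero_and_false_im_eq_zero m ε n x).2]

lemma am_one (x : ℤ) : am m ε x 1 = if x = 1 then I else 0 := by
  rw [show (1 : ℤ) = (0 + 1 : ℕ) from rfl, am_natCast_succ]
  simp [amEndingWith_zero]

end Amplitude

def SolvesDirac (c r : ℝ) (t₀ : ℤ) (u₁ u₂ : ℤ → ℤ → ℝ) : Prop :=
  ∀ x t, t₀ ≤ t →
    u₁ x (t + 1) = (u₁ (x + 1) t + c * u₂ (x + 1) t) / r ∧
    u₂ x (t + 1) = (u₂ (x - 1) t - c * u₁ (x - 1) t) / r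

namespace SolvesDirac

variable {c r : ℝ} {t₀ : ℤ} {u₁ u₂ : ℤ → ℤ → ℝ}

lemma mono (hu : SolvesDirac c r t₀ u₁ u₂) {t₁ : ℤ} (h : t₀ ≤ t₁) : SolvesDirac c r t₁ u₁ u₂ :=
  fun x t ht => hu x t (h.trans ht)

lemma unique {v₁ v₂ : ℤ → ℤ → ℝ} (hu : SolvesDirac c r t₀ u₁ u₂)
    (hv : SolvesDirac c r t₀ v₁ v₂) (h₁ : ∀ x, u₁ x t₀ = v₁ x t₀) (h₂ : ∀ x, u₂ x t₀ = v₂ x t₀)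
    {t : ℤ} (ht : t₀ ≤ t) : (∀ x, u₁ x t = v₁ x t) ∧ ∀ x, u₂ x t = v₂ x t := by
  induction t, ht using Int.leInduction with
  | base => exact ⟨h₁, h₂⟩
  | succ t ht ih =>
    refine ⟨fun x => ?_, fun x => ?_⟩
    · rw [(hu x t ht).1, (hv x t ht).1, ih.1, ih.2]
    · rw [(hu x t ht).2, (hv x t ht).2, ih.1, ih.2]

lemma huygens_sum (hu : SolvesDirac c r 1 u₁ u₂) (g₁ g₂ : ℤ → ℝ) (s : Finset ℤ) (t' : ℤ) :
    SolvesDirac c r t'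
      (fun x t => ∑ x' ∈ s,
        (g₂ x' * u₁ (x - x' + 1) (t - t' + 1) + g₁ x' * u₂ (x' - x + 1) (t - t' + 1)))
      (fun x t => ∑ x' ∈ s,
        (g₂ x' * u₂ (x - x' + 1) (t - t' + 1) - g₁ x' * u₁ (x' - x + 1) (t - t' + 1))) := by
  intro x t ht
  have hT : 1 ≤ t - t' + 1 := by omega
  beta_reduce
  rw [show t + 1 - t' + 1 = t - t' + 1 + 1 by ring, mul_sum, mul_sum, ← sum_add_distrib,
    ← sum_sub_distrib, sum_div, sum_div]
  constructor <;> refine sum_congr rfl fun x' _ => ?_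
  · rw [(hu _ _ hT).1, (hu _ _ hT).2]
    ring_nf
  · rw [(hu _ _ hT).1, (hu _ _ hT).2]
    ring_nf

end SolvesDirac

lemma solvesDirac_am (m ε : ℝ) :
    SolvesDirac (m * ε) (Real.sqrt (1 + m ^ 2 * ε ^ 2)) 1
      (fun x t => (am m ε x t).re) (fun x t => (am m ε x t).im) := by
  intro x t ht
  obtain ⟨n, rfl⟩ : ∃ n : ℕ, t = (n + 1 : ℕ) := ⟨t.toNat - 1, by omega⟩
  rw [show ((n + 1 : ℕ) : ℤ) + 1 = (n + 1 + 1 : ℕ) by push_cast; ring]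
  simp only [re_am_natCast_succ, im_am_natCast_succ, amEndingWith_succ]
  simp [div_ofReal_re, div_ofReal_im, sub_eq_add_neg,
    (amEndingWith_true_re_eq_zero_and_false_im_eq_zero m ε n (x + 1)).1]

lemma sum_mul_re_am_one_add_mul_im (m ε : ℝ) (g₁ g₂ : ℤ → ℝ) {s : Finset ℤ}
    (hs : ∀ x ∉ s, g₁ x = 0) (x : ℤ) :
    ∑ x' ∈ s, (g₂ x' * (am m ε (x - x' + 1) 1).re + g₁ x' * (am m ε (x' - x + 1) 1).im) =
      g₁ x := by
  simp [am_one, apply_ite, sub_eq_zero]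
  exact fun h => (hs x h).symm

lemma sum_mul_im_am_one_sub_mul_re (m ε : ℝ) (g₁ g₂ : ℤ → ℝ) {s : Finset ℤ}
    (hs : ∀ x ∉ s, g₂ x = 0) (x : ℤ) :
    ∑ x' ∈ s, (g₂ x' * (am m ε (x - x' + 1) 1).im - g₁ x' * (am m ε (x' - x + 1) 1).re) =
      g₂ x := by
  simp [am_one, apply_ite, sub_eq_zero]
  exact fun h => (hs x h).symm

theorem huygens_principle_general (m ε : ℝ) (x t t' : ℤ)
    (h1 : t' < t) (h2 : 0 < t') :
    (am m ε x t).re =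
      ∑' x' : ℤ, ((am m ε x' t').im * (am m ε (x - x' + 1) (t - t' + 1)).re +
        (am m ε x' t').re * (am m ε (x' - x + 1) (t - t' + 1)).im) ∧
    (am m ε x t).im =
      ∑' x' : ℤ, ((am m ε x' t').im * (am m ε (x - x' + 1) (t - t' + 1)).im -
        (am m ε x' t').re * (am m ε (x' - x + 1) (t - t' + 1)).re) := by
  set s := Icc (-t') t'
  have hsupp : ∀ x' ∉ s, am m ε x' t' = 0 := fun x' hx' =>
    am_eq_zero_of_lt_abs m ε h2.le (by rw [mem_Icc] at hx'; rw [lt_abs]; omega)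
  have hre : ∀ x' ∉ s, (am m ε x' t').re = 0 := fun x' hx' => by simp [hsupp x' hx']
  have him : ∀ x' ∉ s, (am m ε x' t').im = 0 := fun x' hx' => by simp [hsupp x' hx']
  have hD := solvesDirac_am m ε
  obtain ⟨h₁, h₂⟩ := (hD.mono (by omega)).unique
    (hD.huygens_sum (fun x' => (am m ε x' t').re) (fun x' => (am m ε x' t').im) s t')
    (fun x => by simpa using (sum_mul_re_am_one_add_mul_im m ε _ _ hre x).symm)
    (fun x => by simpa using (sum_mul_im_am_one_sub_mul_re m ε _ _ him x).symm)
    h1.le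
  rw [tsum_eq_sum fun x' hx' => by simp [hre x' hx', him x' hx'],
    tsum_eq_sum fun x' hx' => by simp [hre x' hx', him x' hx']]
  exact ⟨h₁ x, h₂ x⟩

/-- Huygens' principle for the model with mass (lattice coordinates). -/
theorem huygens_principle (m ε : ℝ) (hε : 0 < ε) (hm : 0 ≤ m) (x t t' : ℤ)
    (h1 : t' < t) (h2 : 0 < t') :
    (am m ε x t).re =
      ∑' x' : ℤ, ((am m ε x' t').im * (am m ε (x - x' + 1) (t - t' + 1)).re +
        (am m ε x' t').re * (am m ε (x' - x + 1) (t - t' + 1)).im) ∧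
    (am m ε x t).im =
      ∑' x' : ℤ, ((am m ε x' t').im * (am m ε (x - x' + 1) (t - t' + 1)).im -
        (am m ε x' t').re * (am m ε (x' - x + 1) (t - t' + 1)).re) :=
  huygens_principle_general m ε x t t' h1 h2
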